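/- Let X, Y, Z be real normed linear spaces, A ⊆ X an open convex set, F : A → Y a d.c. mapping, and G : Y → Z a d.c. mapping admitting a control function g : Y → ℝ that is bounded on every bounded subset of Y. Then G ∘ F is d.c. on A. -/

import Mathlib

open Set Metric Bornology Filter NNReal

/-- `f` is a control function for `F` on the convex set `C`. -/
def IsControlOn {X Y : Type*} [NormedAddCommGroup X] [NormedSpace ℝ X]
    [NormedAddCommGroup Y] [NormedSpace ℝ Y]
    (C : Set X) (F : X → Y) (f : X → ℝ) : Prop :=
  ContinuousOn f C ∧
    ∀ φ : Y →L[ℝ] ℝ, ‖φ‖ ≤ 1 → ConvexOn ℝ C (fun x => φ (F x) + f x)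

/-- `F` is a d.c. (delta-convex) mapping on `C`. -/
def IsDCOn {X Y : Type*} [NormedAddCommGroup X] [NormedSpace ℝ X]
    [NormedAddCommGroup Y] [NormedSpace ℝ Y]
    (C : Set X) (F : X → Y) : Prop :=
  ContinuousOn F C ∧ ∃ f : X → ℝ, IsControlOn C F f

/-- `g` is a d.c. function on `C`: a difference of two continuous convex functions. -/
def IsDCFnOn {X : Type*} [NormedAddCommGroup X] [NormedSpace ℝ X]
    (C : Set X) (g : X → ℝ) : Prop :=
  ∃ p q : X → ℝ, ContinuousOn p C ∧ ContinuousOn q C ∧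
    ConvexOn ℝ C p ∧ ConvexOn ℝ C q ∧ ∀ x ∈ C, g x = p x - q x

/-- `A ⊂⊂ B`: some ε-enlargement of `A` is contained in `B`. -/
def SubSub {X : Type*} [NormedAddCommGroup X] (A B : Set X) : Prop :=
  ∃ ε > (0:ℝ), ∀ a ∈ A, ∀ y : X, ‖y‖ < ε → a + y ∈ B

/-- `N` is an equivalent norm on `Y` with modulus of convexity of power type 2. -/
def IsEquivNormPT2 {Y : Type*} [NormedAddCommGroup Y] [NormedSpace ℝ Y] (N : Y → ℝ) : Prop :=
  (∀ u v : Y, N (u + v) ≤ N u + N v) ∧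
  (∀ (a : ℝ) (u : Y), N (a • u) = |a| * N u) ∧
  (∃ c₁ c₂ : ℝ, 0 < c₁ ∧ 0 < c₂ ∧ ∀ u : Y, c₁ * ‖u‖ ≤ N u ∧ N u ≤ c₂ * ‖u‖) ∧
  (∃ a : ℝ, 0 < a ∧ ∀ ε : ℝ, ε ∈ Set.Ioc (0:ℝ) 2 → ∀ u v : Y,
    N u ≤ 1 → N v ≤ 1 → ε ≤ N (u - v) → a * ε ^ 2 ≤ 1 - N ((2⁻¹ : ℝ) • (u + v)))

/-- `G` is `C^{1,1}` on `U`: Fréchet differentiable with Lipschitz derivative. -/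
def IsC11On {X Y : Type*} [NormedAddCommGroup X] [NormedSpace ℝ X]
    [NormedAddCommGroup Y] [NormedSpace ℝ Y] (U : Set X) (G : X → Y) : Prop :=
  ∃ G' : X → X →L[ℝ] Y, (∀ x ∈ U, HasFDerivAt G (G' x) x) ∧
    ∃ L : NNReal, LipschitzOnWith L G' U

/-- `F` is locally d.c. on `C`: each point of `C` has a convex neighborhood `U`
with `F` d.c. on `U ∩ C`. -/
def LocallyDCOn {X Y : Type*} [NormedAddCommGroup X] [NormedSpace ℝ X]
    [NormedAddCommGroup Y] [NormedSpace ℝ Y] (C : Set X) (F : X → Y) : Prop :=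
  ∀ a ∈ C, ∃ U : Set X, U ∈ nhds a ∧ Convex ℝ U ∧ IsDCOn (U ∩ C) F


/-!
Subtracting a continuous affine minorant (Hahn–Banach for the open strict epigraph) makes the
control `f` of `F` nonnegative. Since `g` is bounded on bounded sets, so is `G`; hence the convex
functions `ψ ∘ G + g`, `‖ψ‖ ≤ 1`, are uniformly bounded on balls, and `G`, `g` are Lipschitz on the
ball of radius `t` with a constant `τ t` that can be taken nondecreasing in `t`. Let `Λ` be convex
with slopes at least `2 τ` and `q = ‖F‖ + 3 f`. At a convex combination of `x₁, x₂` where `F` has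
defect `D`, the defect of `ψ ∘ G ∘ F + g ∘ F` is at most `2 τ ρ * D` for `ρ = q + D`, and the defect
of `Λ ∘ q` is at least that. So `g ∘ F + Λ ∘ q` is a control function for `G ∘ F`.
-/

theorem ConvexOn.exists_affine_le_of_isOpen {X : Type*} [NormedAddCommGroup X] [NormedSpace ℝ X]
    {A : Set X} {f : X → ℝ} (hA : IsOpen A) (hf : ConvexOn ℝ A f) (hfc : ContinuousOn f A) :
    ∃ (ℓ : X →L[ℝ] ℝ) (c : ℝ), ∀ x ∈ A, ℓ x + c ≤ f x := by
  rcases A.eq_empty_or_nonempty with rfl | ⟨x₀, hx₀⟩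
  · exact ⟨0, 0, by simp⟩
  set S := {p : X × ℝ | p.1 ∈ A ∧ f p.1 < p.2}
  have hSopen : IsOpen S :=
    ContinuousOn.isOpen_inter_preimage (t := {q : ℝ × ℝ | q.1 < q.2})
      ((hfc.comp continuousOn_fst fun _ hp => hp).prodMk continuousOn_snd)
      (hA.preimage continuous_fst) (isOpen_lt continuous_fst continuous_snd)
  obtain ⟨L, hL⟩ := geometric_hahn_banach_open_point hf.convex_strict_epigraph hSopen
    (fun h : (x₀, f x₀) ∈ S => lt_irrefl _ h.2)
  set r := L (0, 1)
  have hsplit (x : X) (t : ℝ) : L (x, t) = L (x, 0) + t * r := by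
    rw [show ((x, t) : X × ℝ) = (x, 0) + t • (0, 1) from Prod.ext (by simp) (by simp), map_add,
      map_smul, smul_eq_mul]
  have hsep (x : X) (hx : x ∈ A) (t : ℝ) (ht : f x < t) :
      L (x, 0) + t * r < L (x₀, 0) + f x₀ * r := by
    have h := hL (x, t) ⟨hx, ht⟩
    rwa [hsplit x t, hsplit x₀ (f x₀)] at h
  have hr : 0 < -r := by linarith [hsep x₀ hx₀ (f x₀ + 1) (by linarith)]
  refine ⟨(-r)⁻¹ • L.comp (.inl ℝ X ℝ), -(-r)⁻¹ * (L (x₀, 0) + f x₀ * r), fun x hx => ?_⟩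
  refine le_of_forall_gt_imp_ge_of_dense fun t ht => ?_
  have := hsep x hx t ht
  simp only [smul_apply, ContinuousLinearMap.comp_apply,
    ContinuousLinearMap.inl_apply, smul_eq_mul, neg_mul, ← sub_eq_add_neg, ← mul_sub]
  rw [inv_mul_le_iff₀ hr]
  linarith

section Control

variable {X Y : Type*} [NormedAddCommGroup X] [NormedSpace ℝ X]
  [NormedAddCommGroup Y] [NormedSpace ℝ Y] {C : Set X} {F : X → Y} {f : X → ℝ}

theorem IsControlOn.convexOn (hF : IsControlOn C F f) : ConvexOn ℝ C f := by
  simpa using hF.2 0 (by simp)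

theorem IsControlOn.exists_nonneg (hC : IsOpen C) (hF : IsControlOn C F f) :
    ∃ f₀ : X → ℝ, IsControlOn C F f₀ ∧ ∀ x ∈ C, 0 ≤ f₀ x := by
  obtain ⟨ℓ, c, hℓ⟩ := hF.convexOn.exists_affine_le_of_isOpen hC hF.1
  refine ⟨fun x => f x - (ℓ x + c), ⟨hF.1.sub (by fun_prop), fun φ hφ => ?_⟩,
    fun x hx => sub_nonneg.2 (hℓ x hx)⟩
  have hℓconv : ConvexOn ℝ C (fun x => (-ℓ) x + -c) :=
    ((-ℓ).toLinearMap.convexOn hF.convexOn.1).add_const (-c)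
  have hsum : (fun x => φ (F x) + (f x - (ℓ x + c)))
      = fun x => (φ (F x) + f x) + ((-ℓ) x + -c) := by
    ext x
    rw [neg_apply]
    ring
  rw [hsum]
  exact (hF.2 φ hφ).add hℓconv

theorem IsControlOn.norm_sub_combo_le (hF : IsControlOn C F f) {x₁ x₂ : X}
    (hx₁ : x₁ ∈ C) (hx₂ : x₂ ∈ C) {a b : ℝ} (ha : 0 ≤ a) (hb : 0 ≤ b) (hab : a + b = 1) :
    ‖F (a • x₁ + b • x₂) - (a • F x₁ + b • F x₂)‖
      ≤ a * f x₁ + b * f x₂ - f (a • x₁ + b • x₂) := by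
  obtain ⟨ψ, hψ, hψF⟩ := exists_dual_vector'' ℝ (F (a • x₁ + b • x₂) - (a • F x₁ + b • F x₂))
  have hconv := (hF.2 ψ hψ).2 hx₁ hx₂ ha hb hab
  simp only [map_sub, map_add, map_smul, smul_eq_mul, RCLike.ofReal_real_eq_id, id] at hψF hconv
  linarith

end Control

section Lipschitz

variable {Y Z : Type*} [NormedAddCommGroup Y] [NormedSpace ℝ Y]
  [NormedAddCommGroup Z] [NormedSpace ℝ Z] {G : Y → Z} {g : Y → ℝ}

theorem IsControlOn.isBounded_image (hG : IsControlOn univ G g) (hGc : ContinuousAt G 0)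
    (hgbdd : ∀ S : Set Y, IsBounded S → ∃ M : ℝ, ∀ y ∈ S, |g y| ≤ M)
    {S : Set Y} (hS : IsBounded S) : IsBounded (G '' S) := by
  obtain ⟨R, hR, hSR⟩ := hS.subset_closedBall_lt 0 0
  obtain ⟨M, hM⟩ := hgbdd (closedBall 0 R) isBounded_closedBall
  obtain ⟨δ, hδ, hGδ⟩ := Metric.continuousAt_iff.1 hGc 1 one_pos
  set s := δ / (R + δ)
  have hs : 0 < s := by positivity
  have hsR : s * R < δ := by
    rw [div_mul_eq_mul_div, div_lt_iff₀ (by positivity)]; nlinarith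
  have hs1 : s ≤ 1 := (div_le_one (by positivity)).2 (by linarith)
  set a := s / (1 + s)
  set b := 1 / (1 + s)
  have ha : 0 < a := by positivity
  have hb : 0 ≤ b := by positivity
  have hab : a + b = 1 := by rw [← add_div, add_comm, div_self (by positivity)]
  have hb1 : b ≤ 1 := by linarith
  rw [isBounded_iff_forall_norm_le]
  refine ⟨(2 * ‖G 0‖ + 2 * M + 1) / a, ?_⟩
  rintro _ ⟨y, hy, rfl⟩
  have hyR : ‖y‖ ≤ R := by simpa using hSR hy
  -- `0` is a convex combination of `y` and a point `z` near `0`, where `G` is bounded by continuity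
  set z := (-s) • y
  have hzy : ‖z‖ = s * ‖y‖ := by rw [norm_smul, norm_neg, Real.norm_of_nonneg hs.le]
  have hGz : ‖G z‖ ≤ ‖G 0‖ + 1 := by
    have : dist z 0 < δ := by rw [dist_zero_right, hzy]; nlinarith [norm_nonneg y]
    linarith [norm_le_norm_add_norm_sub' (G z) (G 0), (dist_eq_norm (G z) (G 0)) ▸ hGδ this]
  have hcombo : a • y + b • z = 0 := by
    simp only [a, b, z, smul_smul]; rw [← add_smul]; field_simp; simp
  have hdefect := hG.norm_sub_combo_le (mem_univ y) (mem_univ z) ha.le hb hab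
  rw [hcombo] at hdefect
  have hg (w : Y) (hw : ‖w‖ ≤ R) : |g w| ≤ M := hM w (by simpa using hw)
  have hgy := abs_le.1 (hg y hyR)
  have hgz := abs_le.1 (hg z (by rw [hzy]; nlinarith [norm_nonneg y]))
  have hg0 := abs_le.1 (hg 0 (by simpa using hR.le))
  have hGy : a * ‖G y‖ ≤ ‖G 0‖ + ‖G 0 - (a • G y + b • G z)‖ + b * ‖G z‖ := by
    have h := norm_sub_le (a • G y + b • G z) (b • G z)
    rw [add_sub_cancel_right, norm_smul, norm_smul, Real.norm_of_nonneg ha.le,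
      Real.norm_of_nonneg hb] at h
    linarith [norm_le_norm_add_norm_sub' (a • G y + b • G z) (G 0),
      norm_sub_rev (a • G y + b • G z) (G 0)]
  rw [le_div_iff₀ ha]
  nlinarith [mul_le_mul_of_nonneg_left hgy.2 ha.le, mul_le_mul_of_nonneg_left hgz.2 hb,
    mul_le_mul hb1 hGz (norm_nonneg _) zero_le_one]

theorem IsControlOn.exists_lipschitzOnWith_ball (hG : IsControlOn univ G g)
    (hGc : ContinuousAt G 0) (hgbdd : ∀ S : Set Y, IsBounded S → ∃ M : ℝ, ∀ y ∈ S, |g y| ≤ M)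
    (R : ℝ) : ∃ K, LipschitzOnWith K G (ball 0 R) ∧ LipschitzOnWith K g (ball 0 R) := by
  obtain ⟨M, hM⟩ := hgbdd (ball 0 (R + 1)) isBounded_ball
  obtain ⟨B, hB⟩ := isBounded_iff_forall_norm_le.1 (hG.isBounded_image hGc hgbdd isBounded_ball)
  set K := (2 * (B + M)).toNNReal
  have hlip (ψ : Z →L[ℝ] ℝ) (hψ : ‖ψ‖ ≤ 1) :
      LipschitzOnWith K (fun y => ψ (G y) + g y) (ball 0 R) := by
    have hbound (y : Y) (hy : dist y 0 < R + 1) : |ψ (G y) + g y| ≤ B + M := by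
      have hψy : |ψ (G y)| ≤ ‖G y‖ := by simpa using ψ.le_of_opNorm_le hψ (G y)
      linarith [abs_add_le (ψ (G y)) (g y), hB (G y) (mem_image_of_mem G hy), hM y hy]
    simpa using ((hG.2 ψ hψ).subset (subset_univ _) (convex_ball _ _)).lipschitzOnWith_of_abs_le
      one_pos hbound
  have hglip : LipschitzOnWith K g (ball 0 R) := by simpa using hlip 0 (by simp)
  refine ⟨2 * K, LipschitzOnWith.of_dist_le_mul fun y₁ hy₁ y₂ hy₂ => ?_, hglip.weaken ?_⟩
  · obtain ⟨ψ, hψ, hψG⟩ := exists_dual_vector'' ℝ (G y₁ - G y₂)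
    have hu := (hlip ψ hψ).dist_le_mul y₁ hy₁ y₂ hy₂
    have hg := hglip.dist_le_mul y₁ hy₁ y₂ hy₂
    simp only [map_sub, RCLike.ofReal_real_eq_id, id, dist_eq_norm, Real.norm_eq_abs] at hψG hu hg ⊢
    rw [← hψG, NNReal.coe_mul, NNReal.coe_two]
    linarith [le_abs_self (ψ (G y₁) + g y₁ - (ψ (G y₂) + g y₂)), neg_abs_le (g y₁ - g y₂)]
  · exact le_mul_of_one_le_left K.2 one_le_two

theorem IsControlOn.le_combo_add_of_lipschitzOnWith (hG : IsControlOn univ G g) {s : Set Y}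
    {K : ℝ≥0} (hGK : LipschitzOnWith K G s) (hgK : LipschitzOnWith K g s)
    {ψ : Z →L[ℝ] ℝ} (hψ : ‖ψ‖ ≤ 1) {u y₁ y₂ : Y} {a b : ℝ} (ha : 0 ≤ a) (hb : 0 ≤ b)
    (hab : a + b = 1) (hu : u ∈ s) (hw : a • y₁ + b • y₂ ∈ s) :
    ψ (G u) + g u
      ≤ a * (ψ (G y₁) + g y₁) + b * (ψ (G y₂) + g y₂) + 2 * K * ‖u - (a • y₁ + b • y₂)‖ := by
  have hconv := (hG.2 ψ hψ).2 (mem_univ y₁) (mem_univ y₂) ha hb hab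
  simp only [smul_eq_mul] at hconv
  set w := a • y₁ + b • y₂
  have hGuw := hGK.dist_le_mul u hu w hw
  have hguw := hgK.dist_le_mul u hu w hw
  have hψuw : |ψ (G u) - ψ (G w)| ≤ ‖G u - G w‖ := by
    simpa using ψ.le_of_opNorm_le hψ (G u - G w)
  simp only [dist_eq_norm, Real.norm_eq_abs] at hGuw hguw
  linarith [le_abs_self (ψ (G u) - ψ (G w)), le_abs_self (g u - g w)]

end Lipschitz

theorem exists_monotone_lipschitzOnWith_closedBall {α β : Type*} [PseudoMetricSpace α]
    [PseudoEMetricSpace β] {f : α → β} (x₀ : α)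
    (hf : ∀ R : ℝ, ∃ K, LipschitzOnWith K f (ball x₀ R)) :
    ∃ τ : ℝ → ℝ≥0, Monotone τ ∧ ∀ t, LipschitzOnWith (τ t) f (closedBall x₀ t) := by
  choose K hK using fun n : ℕ => hf n
  refine ⟨fun t => partialSups K (⌈t⌉₊ + 1),
    fun s t hst => partialSups_monotone K (by gcongr), fun t => ?_⟩
  refine ((hK _).weaken (le_partialSups K _)).mono (closedBall_subset_ball ?_)
  push_cast
  linarith [Nat.le_ceil t]

theorem Monotone.exists_convexOn_sub_ge {τ : ℝ → ℝ} (hτ : Monotone τ) :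
    ∃ Λ : ℝ → ℝ, Continuous Λ ∧ ConvexOn ℝ univ Λ ∧
      ∀ a b, a ≤ b → τ a * (b - a) ≤ Λ b - Λ a := by
  have hint (a b : ℝ) : IntervalIntegrable τ MeasureTheory.volume a b := hτ.intervalIntegrable
  set Λ := fun s => ∫ u in (0 : ℝ)..s, τ u
  have hΛ (a b : ℝ) : Λ b - Λ a = ∫ u in a..b, τ u :=
    intervalIntegral.integral_interval_sub_left (hint 0 b) (hint 0 a)
  have hlow (a b : ℝ) (hab : a ≤ b) : τ a * (b - a) ≤ Λ b - Λ a := by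
    rw [hΛ, mul_comm, ← smul_eq_mul, ← intervalIntegral.integral_const]
    exact intervalIntegral.integral_mono_on hab intervalIntegrable_const (hint a b)
      fun u hu => hτ hu.1
  have hhigh (a b : ℝ) (hab : a ≤ b) : Λ b - Λ a ≤ τ b * (b - a) := by
    rw [hΛ, mul_comm, ← smul_eq_mul, ← intervalIntegral.integral_const]
    exact intervalIntegral.integral_mono_on hab (hint a b) intervalIntegrable_const
      fun u hu => hτ hu.2
  refine ⟨Λ, intervalIntegral.continuous_primitive hint 0, ?_, hlow⟩
  refine convexOn_iff_slope_mono_adjacent.2 ⟨convex_univ, fun x y z _ _ hxy hyz => ?_⟩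
  calc (Λ y - Λ x) / (y - x) ≤ τ y := (div_le_iff₀ (sub_pos.2 hxy)).2 (hhigh x y hxy.le)
    _ ≤ (Λ z - Λ y) / (z - y) := (le_div_iff₀ (sub_pos.2 hyz)).2 (hlow y z hyz.le)

theorem IsControlOn.comp_of_lipschitzOnWith_closedBall {X Y Z : Type*}
    [NormedAddCommGroup X] [NormedSpace ℝ X] [NormedAddCommGroup Y] [NormedSpace ℝ Y]
    [NormedAddCommGroup Z] [NormedSpace ℝ Z] {A : Set X} {F : X → Y} {f : X → ℝ}
    {G : Y → Z} {g : Y → ℝ} (hF : IsControlOn A F f) (hFc : ContinuousOn F A)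
    (hf : ∀ x ∈ A, 0 ≤ f x) (hG : IsControlOn univ G g) {τ : ℝ → ℝ≥0} (hτ : Monotone τ)
    (hGτ : ∀ t, LipschitzOnWith (τ t) G (closedBall 0 t))
    (hgτ : ∀ t, LipschitzOnWith (τ t) g (closedBall 0 t)) :
    ∃ h : X → ℝ, IsControlOn A (G ∘ F) h := by
  obtain ⟨Λ, hΛc, hΛconv, hΛ⟩ := Monotone.exists_convexOn_sub_ge (τ := fun t => 2 * (τ t : ℝ))
    fun _ _ h => mul_le_mul_of_nonneg_left (NNReal.coe_le_coe.2 (hτ h)) zero_le_two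
  have hΛmono : Monotone Λ := fun a b hab => by
    linarith [hΛ a b hab, mul_nonneg (mul_nonneg zero_le_two (τ a).coe_nonneg) (sub_nonneg.2 hab)]
  -- the defect of `q` is at least `2 D`, which leaves room for the radius `ρ = q xt + D` below
  set q := fun x => ‖F x‖ + 3 * f x
  refine ⟨fun x => g (F x) + Λ (q x), ?_, fun ψ hψ => ⟨hF.convexOn.1, ?_⟩⟩
  · exact ((continuousOn_univ.1 hG.1).comp_continuousOn hFc).add
      (hΛc.comp_continuousOn (hFc.norm.add (continuousOn_const.mul hF.1)))
  intro x₁ hx₁ x₂ hx₂ a b ha hb hab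
  set xt := a • x₁ + b • x₂
  set u := F xt
  set w := a • F x₁ + b • F x₂
  set D := a * f x₁ + b * f x₂ - f xt
  have huw : ‖u - w‖ ≤ D := hF.norm_sub_combo_le hx₁ hx₂ ha hb hab
  have hD : 0 ≤ D := (norm_nonneg _).trans huw
  set ρ := q xt + D
  have hfxt := hf xt (hF.convexOn.1 hx₁ hx₂ ha hb hab)
  have hu : u ∈ closedBall 0 ρ := by
    rw [mem_closedBall_zero_iff]; simp only [ρ, q]; linarith
  have hw : w ∈ closedBall 0 ρ := by
    rw [mem_closedBall_zero_iff]; simp only [ρ, q]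
    linarith [norm_le_norm_add_norm_sub' w u, norm_sub_rev w u]
  have hGF := hG.le_combo_add_of_lipschitzOnWith (hGτ ρ) (hgτ ρ) hψ ha hb hab hu hw
  have hq : q xt + 2 * D ≤ a * q x₁ + b * q x₂ := by
    have hw' : ‖w‖ ≤ a * ‖F x₁‖ + b * ‖F x₂‖ := by
      simpa [norm_smul, abs_of_nonneg ha, abs_of_nonneg hb] using norm_add_le (a • F x₁) (b • F x₂)
    simp only [q]
    linarith [norm_le_norm_add_norm_sub' u w]
  have hΛq : 2 * τ ρ * D ≤ a * Λ (q x₁) + b * Λ (q x₂) - Λ (q xt) := by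
    have := hΛconv.2 (mem_univ (q x₁)) (mem_univ (q x₂)) ha hb hab
    simp only [smul_eq_mul] at this
    linarith [hΛ ρ (ρ + D) (by linarith), hΛmono (show q xt ≤ ρ by linarith),
      hΛmono (show ρ + D ≤ a * q x₁ + b * q x₂ by linarith)]
  show ψ (G u) + (g u + Λ (q xt)) ≤ a * (ψ (G (F x₁)) + (g (F x₁) + Λ (q x₁)))
    + b * (ψ (G (F x₂)) + (g (F x₂) + Λ (q x₂)))
  linarith [mul_le_mul_of_nonneg_left huw (mul_nonneg zero_le_two (τ ρ).coe_nonneg)]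

theorem dc_comp_control_bounded_on_bounded_general {X Y Z : Type*}
    [NormedAddCommGroup X] [NormedSpace ℝ X]
    [NormedAddCommGroup Y] [NormedSpace ℝ Y]
    [NormedAddCommGroup Z] [NormedSpace ℝ Z]
    (A : Set X) (hAopen : IsOpen A)
    (F : X → Y) (hF : IsDCOn A F)
    (G : Y → Z) (hGcont : Continuous G)
    (g : Y → ℝ) (hg : IsControlOn (Set.univ) G g)
    (hgbdd : ∀ S : Set Y, IsBounded S → ∃ M : ℝ, ∀ y ∈ S, |g y| ≤ M) :
    IsDCOn A (G ∘ F) := by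
  obtain ⟨hFc, f, hf⟩ := hF
  obtain ⟨f₀, hf₀, hf₀_nonneg⟩ := hf.exists_nonneg hAopen
  have hlip := hg.exists_lipschitzOnWith_ball hGcont.continuousAt hgbdd
  obtain ⟨τG, hτG, hGτ⟩ :=
    exists_monotone_lipschitzOnWith_closedBall 0 fun R => (hlip R).imp fun _ => And.left
  obtain ⟨τg, hτg, hgτ⟩ :=
    exists_monotone_lipschitzOnWith_closedBall 0 fun R => (hlip R).imp fun _ => And.right
  exact ⟨hGcont.comp_continuousOn hFc, hf₀.comp_of_lipschitzOnWith_closedBall hFc hf₀_nonneg hg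
    (hτG.sup hτg) (fun t => (hGτ t).weaken le_sup_left) (fun t => (hgτ t).weaken le_sup_right)⟩

/-- If `F : A → Y` is d.c. on the open convex set `A` and `G : Y → Z`
is d.c. with a control function bounded on bounded sets, then `G ∘ F` is d.c. on `A`. -/
theorem dc_comp_control_bounded_on_bounded {X Y Z : Type*}
    [NormedAddCommGroup X] [NormedSpace ℝ X]
    [NormedAddCommGroup Y] [NormedSpace ℝ Y]
    [NormedAddCommGroup Z] [NormedSpace ℝ Z]
    (A : Set X) (hAopen : IsOpen A) (hAconv : Convex ℝ A)
    (F : X → Y) (hF : IsDCOn A F)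
    (G : Y → Z) (hGcont : Continuous G)
    (g : Y → ℝ) (hg : IsControlOn (Set.univ) G g)
    (hgbdd : ∀ S : Set Y, IsBounded S → ∃ M : ℝ, ∀ y ∈ S, |g y| ≤ M) :
    IsDCOn A (G ∘ F) :=
  dc_comp_control_bounded_on_bounded_general A hAopen F hF G hGcont g hg hgbdd
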